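/- arXiv:1803.05784 — 2 statements merged into one kernel-verified Lean document; each statement's English description precedes it below -/
import Mathlib

section
/- In the setting of the previous statement, Var(f̄(x)) = (1/(4λ^2))(2 - 2λx e^{-λx} - 2λ(1-x)e^{-λ(1-x)} - e^{-2λx} - e^{-2λ(1-x)}), and consequently E[(f̄(x) - (1+x))^2] = (1/(2λ^2))(1 - λx e^{-λx} - λ(1-x)e^{-λ(1-x)} - e^{-λ}). -/
/-!
Put `a = λx`, `b = λ(1 - x)`. Then `f̄ = 3/2 + ((a - E_L)⁺ - (b - E_R)⁺) / (2λ)`, a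
difference of two independent truncated exponentials. For `E ~ Exp(1)` and `c ≥ 0`,
integrating against the density gives `E (c - E)⁺ = c - 1 + e^{-c}` and
`E ((c - E)⁺)² = c² - 2c + 2 - 2e^{-c}`, so `Var (c - E)⁺ = 1 - 2c e^{-c} - e^{-2c}`;
independence adds the two variances. The mean squared error is the variance plus the
squared bias `E f̄ - (1 + x) = (e^{-a} - e^{-b}) / (2λ)`.
-/

open MeasureTheory ProbabilityTheory Real Set

lemma integral_expMeasure_eq_integral_Ioi {r : ℝ} (hr : 0 ≤ r) (g : ℝ → ℝ) :
    ∫ t, g t ∂expMeasure r = ∫ t in Ioi 0, r * exp (-(r * t)) * g t := by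
  rw [expMeasure, gammaMeasure,
    show gammaPDF 1 r = fun t => ENNReal.ofReal (gammaPDFReal 1 r t) from rfl,
    integral_withDensity_eq_integral_toReal_smul (by fun_prop)
      (ae_of_all _ fun _ => ENNReal.ofReal_lt_top),
    ← integral_Ici_eq_integral_Ioi, ← integral_indicator measurableSet_Ici]
  congr 1 with t
  by_cases ht : 0 ≤ t
  · simp [gammaPDFReal, ht, mul_nonneg hr (exp_nonneg _)]
  · simp [gammaPDFReal, ht]

lemma ae_nonneg_expMeasure (r : ℝ) : ∀ᵐ t ∂expMeasure r, 0 ≤ t := by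
  simp_rw [ae_iff, not_le]
  show volume.withDensity (gammaPDF 1 r) (Iio 0) = 0
  rw [withDensity_apply _ measurableSet_Iio]
  exact lintegral_gammaPDF_of_nonpos le_rfl

lemma setIntegral_Ioi_exp_neg_mul_comp_max_sub {g : ℝ → ℝ} (hg : g 0 = 0) {c : ℝ}
    (hc : 0 ≤ c) :
    ∫ t in Ioi 0, exp (-t) * g (max (c - t) 0) = ∫ t in 0..c, exp (-t) * g (c - t) := by
  rw [intervalIntegral.integral_of_le hc, setIntegral_eq_of_subset_of_forall_sdiff_eq_zero
    measurableSet_Ioi Ioc_subset_Ioi_self]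
  · exact setIntegral_congr_fun measurableSet_Ioc fun t ht => by
      rw [max_eq_left (sub_nonneg.2 ht.2)]
  · rintro t ⟨ht0, htc⟩
    have hct : c < t := lt_of_not_ge fun h => htc ⟨ht0, h⟩
    rw [max_eq_right (by linarith), hg, mul_zero]

lemma integral_exp_neg_mul_sub (c : ℝ) :
    ∫ t in 0..c, exp (-t) * (c - t) = c - 1 + exp (-c) := by
  have h : ∀ t ∈ uIcc 0 c,
      HasDerivAt (fun t => (t - c + 1) * exp (-t)) (exp (-t) * (c - t)) t := fun t _ =>
    ((((hasDerivAt_id' t).sub_const c).add_const 1).mul (hasDerivAt_neg t).exp).congr_deriv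
      (by ring)
  rw [intervalIntegral.integral_eq_sub_of_hasDerivAt h
    (Continuous.intervalIntegrable (by fun_prop) _ _)]
  simp
  ring

lemma integral_exp_neg_mul_sub_sq (c : ℝ) :
    ∫ t in 0..c, exp (-t) * (c - t) ^ 2 = c ^ 2 - 2 * c + 2 - 2 * exp (-c) := by
  have h : ∀ t ∈ uIcc 0 c, HasDerivAt (fun t => -((c - t) ^ 2 - 2 * (c - t) + 2) * exp (-t))
      (exp (-t) * (c - t) ^ 2) t := by
    intro t _
    have hs := (hasDerivAt_id' t).const_sub c
    exact ((((hs.pow 2).sub (hs.const_mul 2)).add_const 2).neg.mul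
      (hasDerivAt_neg t).exp).congr_deriv (by simp; ring)
  rw [intervalIntegral.integral_eq_sub_of_hasDerivAt h
    (Continuous.intervalIntegrable (by fun_prop) _ _)]
  simp
  ring

lemma integral_max_sub_expMeasure_one {c : ℝ} (hc : 0 ≤ c) :
    ∫ t, max (c - t) 0 ∂expMeasure 1 = c - 1 + exp (-c) := by
  rw [integral_expMeasure_eq_integral_Ioi zero_le_one]
  simp only [one_mul]
  exact (setIntegral_Ioi_exp_neg_mul_comp_max_sub (g := id) rfl hc).trans
    (integral_exp_neg_mul_sub c)

lemma integral_max_sub_sq_expMeasure_one {c : ℝ} (hc : 0 ≤ c) :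
    ∫ t, max (c - t) 0 ^ 2 ∂expMeasure 1 = c ^ 2 - 2 * c + 2 - 2 * exp (-c) := by
  rw [integral_expMeasure_eq_integral_Ioi zero_le_one]
  simp only [one_mul]
  exact (setIntegral_Ioi_exp_neg_mul_comp_max_sub (g := (· ^ 2)) (zero_pow two_ne_zero)
    hc).trans (integral_exp_neg_mul_sub_sq c)

lemma memLp_max_sub_expMeasure_one (c : ℝ) (p : ENNReal) :
    MemLp (fun t => max (c - t) 0) p (expMeasure 1) := by
  have := isProbabilityMeasure_expMeasure one_pos
  refine memLp_of_bounded (a := 0) (b := |c|) ?_ (by fun_prop) p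
  filter_upwards [ae_nonneg_expMeasure 1] with t ht
  exact ⟨le_max_right _ _, max_le (by linarith [le_abs_self c]) (abs_nonneg c)⟩

lemma variance_max_sub_expMeasure_one {c : ℝ} (hc : 0 ≤ c) :
    Var[fun t => max (c - t) 0; expMeasure 1] = 1 - 2 * c * exp (-c) - exp (-(2 * c)) := by
  have := isProbabilityMeasure_expMeasure one_pos
  rw [variance_eq_sub (memLp_max_sub_expMeasure_one c 2)]
  simp only [Pi.pow_apply]
  rw [integral_max_sub_sq_expMeasure_one hc, integral_max_sub_expMeasure_one hc,
    show -(2 * c) = -c + -c by ring, exp_add]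
  ring

section MeasurePreserving

variable {Ω : Type*} [MeasurableSpace Ω] {μ : Measure Ω} {E : Ω → ℝ}

lemma memLp_max_sub_of_measurePreserving (hE : MeasurePreserving E μ (expMeasure 1)) (c : ℝ)
    (p : ENNReal) : MemLp (fun ω => max (c - E ω) 0) p μ :=
  (memLp_max_sub_expMeasure_one c p).comp_measurePreserving hE

lemma integral_max_sub_of_measurePreserving (hE : MeasurePreserving E μ (expMeasure 1))
    {c : ℝ} (hc : 0 ≤ c) : ∫ ω, max (c - E ω) 0 ∂μ = c - 1 + exp (-c) := by
  rw [← integral_max_sub_expMeasure_one hc, ← hE.map_eq,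
    integral_map hE.aemeasurable (by fun_prop)]

lemma variance_max_sub_of_measurePreserving (hE : MeasurePreserving E μ (expMeasure 1))
    {c : ℝ} (hc : 0 ≤ c) :
    Var[fun ω => max (c - E ω) 0; μ] = 1 - 2 * c * exp (-c) - exp (-(2 * c)) :=
  (hE.variance_fun_comp (f := fun t => max (c - t) 0) (by fun_prop)).trans
    (variance_max_sub_expMeasure_one hc)

end MeasurePreserving

lemma ProbabilityTheory.IndepFun.variance_fun_sub {Ω : Type*} [MeasurableSpace Ω] {μ : Measure Ω}
    {X Y : Ω → ℝ} (hX : MemLp X 2 μ) (hY : MemLp Y 2 μ) (h : X ⟂ᵢ[μ] Y) :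
    Var[fun ω ↦ X ω - Y ω; μ] = Var[X; μ] + Var[Y; μ] := by
  rw [show (fun ω ↦ X ω - Y ω) = X + -Y from sub_eq_add_neg X Y,
    (h.comp measurable_id measurable_neg).variance_add hX hY.neg, variance_neg]

lemma integral_sub_sq_eq_variance_add_sq {Ω : Type*} [MeasurableSpace Ω] {μ : Measure Ω}
    [IsProbabilityMeasure μ] {X : Ω → ℝ} (hX : MemLp X 2 μ) (c : ℝ) :
    ∫ ω, (X ω - c) ^ 2 ∂μ = Var[X; μ] + (μ[X] - c) ^ 2 := by
  have hXc : MemLp (fun ω => X ω - c) 2 μ := hX.sub (memLp_const c)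
  rw [← variance_sub_const hX.aestronglyMeasurable c, variance_eq_sub hXc,
    integral_sub (hX.integrable one_le_two) (integrable_const c)]
  simp

lemma one_add_max_add_min_div_two_eq {lam : ℝ} (hlam : 0 < lam) (x s r : ℝ) :
    1 + (max (x - lam⁻¹ * s) 0 + min (x + lam⁻¹ * r) 1) / 2
      = 3 / 2 + (2 * lam)⁻¹ * (max (lam * x - s) 0 - max (lam * (1 - x) - r) 0) := by
  have hL : max (x - lam⁻¹ * s) 0 = lam⁻¹ * max (lam * x - s) 0 := by
    rw [mul_max_of_nonneg _ _ (inv_nonneg.2 hlam.le), mul_zero]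
    field_simp
  have hR : min (x + lam⁻¹ * r) 1 = 1 - lam⁻¹ * max (lam * (1 - x) - r) 0 := by
    rw [mul_max_of_nonneg _ _ (inv_nonneg.2 hlam.le), mul_zero, ← min_sub_sub_left]
    field_simp
    ring_nf
  rw [hL, hR]
  field_simp
  ring

theorem variance_and_bias_fbar
    {Ω : Type*} [MeasureSpace Ω] [IsProbabilityMeasure (ℙ : Measure Ω)]
    (x lam : ℝ) (hx : x ∈ Set.Icc (0:ℝ) 1) (hlam : 0 < lam)
    (EL ER : Ω → ℝ) (hEL : Measurable EL) (hER : Measurable ER)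
    (hindep : IndepFun EL ER ℙ)
    (hdL : Measure.map EL ℙ = expMeasure 1) (hdR : Measure.map ER ℙ = expMeasure 1) :
    (variance (fun ω => 1 + (max (x - lam⁻¹ * EL ω) 0 + min (x + lam⁻¹ * ER ω) 1) / 2) ℙ
        = 1 / (4 * lam ^ 2) * (2 - 2 * lam * x * Real.exp (-(lam * x))
            - 2 * lam * (1 - x) * Real.exp (-(lam * (1 - x)))
            - Real.exp (-(2 * lam * x)) - Real.exp (-(2 * lam * (1 - x))))) ∧
      (∫ ω, ((1 + (max (x - lam⁻¹ * EL ω) 0 + min (x + lam⁻¹ * ER ω) 1) / 2) - (1 + x)) ^ 2 ∂ℙ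
        = 1 / (2 * lam ^ 2) * (1 - lam * x * Real.exp (-(lam * x))
            - lam * (1 - x) * Real.exp (-(lam * (1 - x))) - Real.exp (-lam))) := by
  have hL : MeasurePreserving EL ℙ (expMeasure 1) := ⟨hEL, hdL⟩
  have hR : MeasurePreserving ER ℙ (expMeasure 1) := ⟨hER, hdR⟩
  simp_rw [one_add_max_add_min_div_two_eq hlam]
  set a := lam * x with ha_def
  set b := lam * (1 - x) with hb_def
  have ha : 0 ≤ a := mul_nonneg hlam.le hx.1
  have hb : 0 ≤ b := mul_nonneg hlam.le (sub_nonneg.2 hx.2)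
  have hPL := memLp_max_sub_of_measurePreserving hL a 2
  have hPR := memLp_max_sub_of_measurePreserving hR b 2
  have hvar : Var[fun ω => 3 / 2 + (2 * lam)⁻¹ * (max (a - EL ω) 0 - max (b - ER ω) 0); ℙ]
      = (2 * lam)⁻¹ ^ 2 * ((1 - 2 * a * exp (-a) - exp (-(2 * a)))
        + (1 - 2 * b * exp (-b) - exp (-(2 * b)))) := by
    rw [variance_const_add (by fun_prop), variance_const_mul,
      (hindep.comp (φ := fun t => max (a - t) 0) (ψ := fun t => max (b - t) 0)
        (by fun_prop) (by fun_prop)).variance_fun_sub hPL hPR,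
      variance_max_sub_of_measurePreserving hL ha, variance_max_sub_of_measurePreserving hR hb]
  have hmean : ∫ ω, 3 / 2 + (2 * lam)⁻¹ * (max (a - EL ω) 0 - max (b - ER ω) 0) ∂ℙ
      = 3 / 2 + (2 * lam)⁻¹ * ((a - 1 + exp (-a)) - (b - 1 + exp (-b))) := by
    rw [integral_add (integrable_const _)
      (by exact ((hPL.sub hPR).integrable one_le_two).const_mul (2 * lam)⁻¹), integral_const_mul,
      integral_sub (hPL.integrable one_le_two) (hPR.integrable one_le_two),
      integral_max_sub_of_measurePreserving hL ha, integral_max_sub_of_measurePreserving hR hb]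
    simp
  have hexp : exp (-lam) = exp (-a) * exp (-b) := by rw [← exp_add, ha_def, hb_def]; ring_nf
  have hsq (c : ℝ) : exp (-(2 * c)) = exp (-c) ^ 2 := by rw [← exp_nat_mul]; ring_nf
  refine ⟨?_, ?_⟩
  · rw [hvar, ha_def, hb_def]
    field_simp
    ring_nf
  · have hf : MemLp
        (fun ω => 3 / 2 + (2 * lam)⁻¹ * (max (a - EL ω) 0 - max (b - ER ω) 0)) 2 ℙ :=
      (memLp_const (3 / 2 : ℝ)).add ((hPL.sub hPR).const_mul (2 * lam)⁻¹)
    rw [integral_sub_sq_eq_variance_add_sq hf, hvar, hmean, hexp, hsq, hsq, ha_def, hb_def]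
    field_simp
    ring
end

section
/- For λ > 0, the integral over x ∈ [0,1] of (1/(2λ^2))(1 - λx e^{-λx} - λ(1-x)e^{-λ(1-x)} - e^{-λ}) equals (1/(2λ^2))(1 - 2/λ + e^{-λ} + (2/λ)e^{-λ}), and for λ ≥ 6 this quantity is at least 1/(3λ^2). -/
/-!
With `I = ∫₀¹ λx e^{-λx} dx = λ⁻¹(1 - (λ+1)e^{-λ})`, obtained from the antiderivative
`-(x + λ⁻¹) e^{-λx}`, the reflection `x ↦ 1 - x` shows that the second exponential term has the
same integral, so the integral is `(1 - 2I - e^{-λ}) / (2λ²)`. For `λ ≥ 6` the bracket is at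
least `1 - 2/λ ≥ 2/3`.
-/

open Real intervalIntegral

theorem hasDerivAt_neg_add_inv_mul_exp_neg_mul {lam : ℝ} (hlam : lam ≠ 0) (x : ℝ) :
    HasDerivAt (fun y => -((y + 1 / lam) * exp (-(lam * y)))) (lam * x * exp (-(lam * x))) x := by
  have hexp : HasDerivAt (fun y => exp (-(lam * y))) (exp (-(lam * x)) * -lam) x :=
    (((hasDerivAt_id' x).const_mul lam).fun_neg.congr_deriv (by simp)).exp
  refine (((hasDerivAt_id' x).add_const (1 / lam)).fun_mul hexp).fun_neg.congr_deriv ?_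
  field_simp
  ring

theorem integral_mul_mul_exp_neg_mul {lam : ℝ} (hlam : lam ≠ 0) (a b : ℝ) :
    ∫ x in a..b, lam * x * exp (-(lam * x))
      = (a + 1 / lam) * exp (-(lam * a)) - (b + 1 / lam) * exp (-(lam * b)) := by
  rw [integral_eq_sub_of_hasDerivAt (fun x _ => hasDerivAt_neg_add_inv_mul_exp_neg_mul hlam x)
    (Continuous.intervalIntegrable (by fun_prop) a b)]
  ring

theorem integral_zero_one_mul_mul_exp_neg_mul {lam : ℝ} (hlam : lam ≠ 0) :
    ∫ x in (0 : ℝ)..1, lam * x * exp (-(lam * x)) = lam⁻¹ * (1 - (lam + 1) * exp (-lam)) := by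
  rw [integral_mul_mul_exp_neg_mul hlam, mul_zero, neg_zero, exp_zero, mul_one]
  field_simp
  ring

theorem integral_zero_one_mul_one_sub_mul_exp {lam : ℝ} (hlam : lam ≠ 0) :
    ∫ x in (0 : ℝ)..1, lam * (1 - x) * exp (-(lam * (1 - x)))
      = lam⁻¹ * (1 - (lam + 1) * exp (-lam)) := by
  rw [integral_comp_sub_left (fun x => lam * x * exp (-(lam * x))) 1]
  simpa using integral_zero_one_mul_mul_exp_neg_mul hlam

theorem one_div_three_mul_sq_le {lam : ℝ} (hlam : 6 ≤ lam) :
    1 / (3 * lam ^ 2)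
      ≤ 1 / (2 * lam ^ 2) * (1 - 2 / lam + exp (-lam) + 2 / lam * exp (-lam)) := by
  have hpos : 0 < lam := by linarith
  have hfrac : 2 / lam ≤ 1 / 3 := by rw [div_le_iff₀ hpos]; linarith
  have hexp : 0 < 2 / lam * exp (-lam) := by positivity
  calc 1 / (3 * lam ^ 2) = 1 / (2 * lam ^ 2) * (2 / 3) := by field_simp
    _ ≤ 1 / (2 * lam ^ 2) * (1 - 2 / lam + exp (-lam) + 2 / lam * exp (-lam)) := by
      gcongr
      linarith [exp_pos (-lam)]

theorem integrated_bias_mondrian_tree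
    (lam : ℝ) (hlam : 0 < lam) :
    (∫ x in (0:ℝ)..1,
        1 / (2 * lam ^ 2) * (1 - lam * x * Real.exp (-(lam * x))
          - lam * (1 - x) * Real.exp (-(lam * (1 - x))) - Real.exp (-lam))
      = 1 / (2 * lam ^ 2) * (1 - 2 / lam + Real.exp (-lam) + 2 / lam * Real.exp (-lam))) ∧
      (6 ≤ lam →
        1 / (3 * lam ^ 2)
          ≤ 1 / (2 * lam ^ 2) * (1 - 2 / lam + Real.exp (-lam) + 2 / lam * Real.exp (-lam))) := by
  refine ⟨?_, one_div_three_mul_sq_le⟩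
  have hint : ∀ f : ℝ → ℝ, Continuous f → IntervalIntegrable f MeasureTheory.volume 0 1 :=
    fun f hf => hf.intervalIntegrable 0 1
  rw [integral_const_mul, integral_sub (hint _ (by fun_prop)) (hint _ (by fun_prop)),
    integral_sub (hint _ (by fun_prop)) (hint _ (by fun_prop)),
    integral_sub (hint _ (by fun_prop)) (hint _ (by fun_prop)),
    integral_zero_one_mul_mul_exp_neg_mul hlam.ne', integral_zero_one_mul_one_sub_mul_exp hlam.ne',
    integral_const, integral_const]
  simp only [sub_zero, smul_eq_mul, one_mul]
  field_simp
  ring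
end
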